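/- For one-forms α, β on a Riemannian manifold and vector fields v = α^♯, w = β^♯, the musical-flat of the Lie bracket satisfies [v,w]^♭ = div(w) v^♭ − div(v) w^♭ − δ(v^♭ ∧ w^♭), where δ is the codifferential. -/

import Mathlib

/- STATEMENT 3: For vector fields v, w on an (flat, finite-dimensional) oriented
Riemannian manifold, `[v,w]^♭ = div(w) v^♭ − div(v) w^♭ − δ(v^♭ ∧ w^♭)`,
where δ is the codifferential. The identity of one-forms is stated by pairing
both sides with an arbitrary tangent vector `z`. -/

open scoped RealInnerProductSpace

variable {E : Type*} [NormedAddCommGroup E] [InnerProductSpace ℝ E]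
  [FiniteDimensional ℝ E]

/-- Divergence of a vector field (`div X = −δ X^♭`): trace of the derivative. -/
noncomputable def vdiv (X : E → E) (x : E) : ℝ :=
  LinearMap.trace ℝ E (fderiv ℝ X x : E →ₗ[ℝ] E)

/-- Lie bracket of vector fields: `[X,Y] = DY·X − DX·Y`. -/
noncomputable def lieB (X Y : E → E) (x : E) : E :=
  fderiv ℝ Y x (X x) - fderiv ℝ X x (Y x)

/-- The two-form `v^♭ ∧ w^♭`, evaluated on a pair of tangent vectors. -/
noncomputable def wedge11 (v w : E → E) (x : E) (a b : E) : ℝ :=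
  ⟪v x, a⟫ * ⟪w x, b⟫ - ⟪v x, b⟫ * ⟪w x, a⟫

/-- The codifferential of a two-form field `ω`, as a one-form evaluated on `z`:
`(δω)(z) = −∑ᵢ ∂_{eᵢ} ω(eᵢ, z)` for an orthonormal basis `eᵢ`. -/
noncomputable def codiff2 (ω : E → E → E → ℝ) (x z : E) : ℝ :=
  -∑ i, fderiv ℝ (fun y => ω y (stdOrthonormalBasis ℝ E i) z) x
      (stdOrthonormalBasis ℝ E i)

private lemma fderiv_inner_const (F : E → E) (a : E) (x u : E)
    (hF : DifferentiableAt ℝ F x) :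
    fderiv ℝ (fun y => ⟪F y, a⟫) x u = ⟪fderiv ℝ F x u, a⟫ := by
  rw [fderiv_inner_apply ℝ hF (differentiableAt_const a)]
  simp

private lemma fderiv_inner_mul (F G : E → E) (a c : E) (x u : E)
    (hF : DifferentiableAt ℝ F x) (hG : DifferentiableAt ℝ G x) :
    fderiv ℝ (fun y => ⟪F y, a⟫ * ⟪G y, c⟫) x u
      = ⟪fderiv ℝ F x u, a⟫ * ⟪G x, c⟫ + ⟪F x, a⟫ * ⟪fderiv ℝ G x u, c⟫ := by
  have h1 : DifferentiableAt ℝ (fun y => ⟪F y, a⟫) x :=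
    hF.inner ℝ (differentiableAt_const a)
  have h2 : DifferentiableAt ℝ (fun y => ⟪G y, c⟫) x :=
    hG.inner ℝ (differentiableAt_const c)
  rw [fderiv_fun_mul h1 h2]
  simp [fderiv_inner_const F a x u hF, fderiv_inner_const G c x u hG]; ring

private lemma trace_eq_sum_inner' (b : OrthonormalBasis (Fin (Module.finrank ℝ E)) ℝ E)
    (T : E →ₗ[ℝ] E) : LinearMap.trace ℝ E T = ∑ i, ⟪b i, T (b i)⟫ := by
  rw [LinearMap.trace_eq_matrix_trace ℝ b.toBasis, Matrix.trace]
  simp [Matrix.diag, LinearMap.toMatrix_apply, OrthonormalBasis.coe_toBasis_repr_apply,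
    OrthonormalBasis.repr_apply_apply, OrthonormalBasis.coe_toBasis]

private lemma sum_inner_apply (b : OrthonormalBasis (Fin (Module.finrank ℝ E)) ℝ E)
    (S : E →ₗ[ℝ] E) (u z : E) : ∑ i, ⟪u, b i⟫ * ⟪S (b i), z⟫ = ⟪S u, z⟫ := by
  conv_rhs => rw [← b.sum_repr' u]
  simp [sum_inner, real_inner_smul_left, real_inner_comm (b _) u]

theorem flat_lieBracket_eq (v w : E → E)
    (hv : ContDiff ℝ (⊤ : ℕ∞) v) (hw : ContDiff ℝ (⊤ : ℕ∞) w) (x z : E) :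
    ⟪lieB v w x, z⟫
      = vdiv w x * ⟪v x, z⟫ - vdiv v x * ⟪w x, z⟫ - codiff2 (wedge11 v w) x z := by
  set b := stdOrthonormalBasis ℝ E with hb
  have hvd : DifferentiableAt ℝ v x := (hv.differentiable (by simp)).differentiableAt
  have hwd : DifferentiableAt ℝ w x := (hw.differentiable (by simp)).differentiableAt
  set T : E →ₗ[ℝ] E := ↑(fderiv ℝ v x) with hT
  set S : E →ₗ[ℝ] E := ↑(fderiv ℝ w x) with hS
  have hcod : codiff2 (wedge11 v w) x z
      = -∑ i, ((⟪T (b i), b i⟫ * ⟪w x, z⟫ + ⟪v x, b i⟫ * ⟪S (b i), z⟫)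
          - (⟪T (b i), z⟫ * ⟪w x, b i⟫ + ⟪v x, z⟫ * ⟪S (b i), b i⟫)) := by
    unfold codiff2
    congr 1
    refine Finset.sum_congr rfl fun i _ => ?_
    have : (fun y => wedge11 v w y (b i) z)
        = fun y => ⟪v y, b i⟫ * ⟪w y, z⟫ - ⟪v y, z⟫ * ⟪w y, b i⟫ := rfl
    rw [this, fderiv_fun_sub ((hvd.inner ℝ (differentiableAt_const _)).fun_mul
        (hwd.inner ℝ (differentiableAt_const _)))
      ((hvd.inner ℝ (differentiableAt_const _)).fun_mul
        (hwd.inner ℝ (differentiableAt_const _)))]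
    simp only [ContinuousLinearMap.coe_sub', Pi.sub_apply]
    rw [fderiv_inner_mul v w (b i) z x (b i) hvd hwd,
        fderiv_inner_mul v w z (b i) x (b i) hvd hwd]
    rfl
  have hsum1 : ∑ i, ⟪T (b i), b i⟫ = vdiv v x := by
    rw [vdiv, trace_eq_sum_inner' b]
    exact Finset.sum_congr rfl fun i _ => (real_inner_comm _ _)
  have hsum2 : ∑ i, ⟪S (b i), b i⟫ = vdiv w x := by
    rw [vdiv, trace_eq_sum_inner' b]
    exact Finset.sum_congr rfl fun i _ => (real_inner_comm _ _)
  have hsum3 : ∑ i, ⟪v x, b i⟫ * ⟪S (b i), z⟫ = ⟪S (v x), z⟫ := sum_inner_apply b S _ z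
  have hsum4 : ∑ i, ⟪T (b i), z⟫ * ⟪w x, b i⟫ = ⟪T (w x), z⟫ := by
    rw [← sum_inner_apply b T (w x) z]
    exact Finset.sum_congr rfl fun i _ => mul_comm _ _
  rw [hcod]
  simp only [Finset.sum_sub_distrib, Finset.sum_add_distrib, ← Finset.sum_mul,
    ← Finset.mul_sum, hsum1, hsum2, hsum3, hsum4]
  have : ⟪lieB v w x, z⟫ = ⟪S (v x), z⟫ - ⟪T (w x), z⟫ := by
    simp [lieB, inner_sub_left, hT, hS]
  rw [this]
  ring
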